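/- Let a, b, c be positive integers. The expected value of the top-right corner entry T(1,b) of a uniformly random plane partition T in an a×b×c box equals a·c/(a+b); equivalently, (a+b) · Σ_T T(1,b) = a·c · N(a,b,c), the sum being over all plane partitions T in the a×b×c box. -/

import Mathlib

/-!
Number the files (diagonals) of the box by `v = b + i - j`, and let `F_v(T)` be the sum of the
entries of `T` on file `v`, where rows that miss the file contribute the frame value `c` (the
file has passed to the left of the box) or `0` (it has not yet entered it). Then `F_0 = 0`,
`F_1 = T(1,b)` and `F_{a+b} = a c`. Toggling file `v` replaces each entry `x` on it by
`lo + hi - x`, where `[lo, hi]` is the range its neighbours allow; this is an involution of the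
set of plane partitions, and since `max + min` of the two neighbours telescopes along the file,
`F_v(T) + F_v(toggle_v T) = F_{v-1}(T) + F_{v+1}(T)`. Summing over all `T`, the totals
`∑_T F_v(T)` form an arithmetic progression in `v` starting at `0`, so
`(a + b) ∑_T T(1,b) = a c N(a,b,c)`.
-/

open Finset

/-- Plane partitions in an `a × b × c` box: assignments of entries in `{0, …, c}` to the
cells of an `a × b` rectangle with weakly decreasing rows and columns. -/
def PlanePartitions (a b c : ℕ) : Finset (Fin a → Fin b → Fin (c + 1)) :=
  univ.filter (fun T =>
    (∀ i : Fin a, ∀ j j' : Fin b, j ≤ j' → T i j' ≤ T i j) ∧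
    (∀ i i' : Fin a, ∀ j : Fin b, i ≤ i' → T i' j ≤ T i j))

/-- The entry `T(i, j)` of a plane partition at the 1-based cell `(i, j)`. -/
def entry (a b c : ℕ) (T : Fin a → Fin b → Fin (c + 1)) (i j : ℕ) : ℕ :=
  if h : 1 ≤ i ∧ i ≤ a ∧ 1 ≤ j ∧ j ≤ b then
    (T ⟨i - 1, by omega⟩ ⟨j - 1, by omega⟩ : ℕ)
  else 0

/-- `E a b c i j` is the expected value of the entry at the 1-based cell `(i, j)` of a
uniformly random plane partition in an `a × b × c` box. -/
def E (a b c i j : ℕ) : ℚ :=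
  (∑ T ∈ PlanePartitions a b c, (entry a b c T i j : ℚ))
    / ((PlanePartitions a b c).card : ℚ)

theorem sum_range_max_add_min_shift {α : Type*} [AddCommMonoid α] [LinearOrder α]
    (A B : ℕ → α) {n : ℕ} (h0 : B 1 ≤ A 0) (hn : B (n + 1) ≤ A n) :
    ∑ i ∈ range n, (max (A (i + 1)) (B (i + 2)) + min (B (i + 1)) (A i)) =
      ∑ i ∈ range n, A (i + 1) + ∑ i ∈ range n, B (i + 1) := by
  cases n with
  | zero => simp
  | succ n =>
    have pair : ∀ i, max (A (i + 1)) (B (i + 2)) + min (B (i + 2)) (A (i + 1)) =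
        A (i + 1) + B (i + 2) := fun i => by rw [min_comm, max_add_min]
    rw [sum_add_distrib, sum_range_succ (fun i => max _ _), sum_range_succ' (fun i => min _ _),
      max_eq_left hn, min_eq_left h0, sum_range_succ (fun i => A (i + 1)),
      sum_range_succ' (fun i => B (i + 1))]
    have hsum : ∑ i ∈ range n, max (A (i + 1)) (B (i + 2)) +
        ∑ i ∈ range n, min (B (i + 2)) (A (i + 1)) =
          ∑ i ∈ range n, A (i + 1) + ∑ i ∈ range n, B (i + 2) := by
      rw [← sum_add_distrib, ← sum_add_distrib]
      exact sum_congr rfl fun i _ => pair i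
    rw [add_add_add_comm, hsum]
    abel

theorem eq_nsmul_of_add_eq_add {M : Type*} [AddCancelCommMonoid M] (p : ℕ → M) {n : ℕ}
    (h0 : p 0 = 0) (h : ∀ u, u + 2 ≤ n → p u + p (u + 2) = p (u + 1) + p (u + 1)) :
    ∀ k ≤ n, p k = k • p 1 := by
  refine Nat.twoStepInduction (by simp [h0]) (by simp) fun k ih₀ ih₁ hk => ?_
  have step := h k hk
  rw [ih₀ (by omega), ih₁ (by omega), ← add_nsmul,
    show k + 1 + (k + 1) = k + (k + 2) by omega, add_nsmul] at step
  exact add_left_cancel step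

namespace PlanePartitions

variable {a b c : ℕ}

/-- `T` in 1-based coordinates, framed by `c` along row `0` and column `0`, and `0` beyond
the box. -/
def pad (T : Fin a → Fin b → Fin (c + 1)) (i j : ℕ) : ℕ :=
  if i = 0 ∨ j = 0 then c else entry a b c T i j

section Pad

variable (T : Fin a → Fin b → Fin (c + 1)) {i j : ℕ}

theorem pad_of_eq_zero (h : i = 0 ∨ j = 0) : pad T i j = c := if_pos h

theorem pad_le (i j : ℕ) : pad T i j ≤ c := by
  unfold pad entry
  split_ifs
  exacts [le_rfl, Fin.is_le _, Nat.zero_le _]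

theorem pad_of_mem (hi : 0 < i) (hia : i ≤ a) (hj : 0 < j) (hjb : j ≤ b) :
    pad T i j = T ⟨i - 1, by omega⟩ ⟨j - 1, by omega⟩ := by
  rw [pad, if_neg (by omega), entry, dif_pos (by omega)]

theorem pad_succ_succ (i : Fin a) (j : Fin b) : pad T (i + 1) (j + 1) = T i j := by
  rw [pad_of_mem T (by omega) i.isLt (by omega) j.isLt]
  rfl

theorem pad_eq_zero (hi : 0 < i) (hj : 0 < j) (h : a < i ∨ b < j) : pad T i j = 0 := by
  rw [pad, if_neg (by omega), entry, dif_neg (by omega)]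

end Pad

variable {T : Fin a → Fin b → Fin (c + 1)}

theorem pad_anti (hT : T ∈ PlanePartitions a b c) {i i' j j' : ℕ} (hi : i ≤ i') (hj : j ≤ j') :
    pad T i' j' ≤ pad T i j := by
  by_cases h0 : i = 0 ∨ j = 0
  · rw [pad_of_eq_zero T h0]
    exact pad_le T i' j'
  by_cases hbox : i' ≤ a ∧ j' ≤ b
  · rw [pad_of_mem T (by omega) hbox.1 (by omega) hbox.2,
      pad_of_mem T (by omega) (by omega) (by omega) (by omega)]
    simp only [PlanePartitions, mem_filter, mem_univ, true_and] at hT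
    exact (hT.2 _ _ _ (Fin.mk_le_mk.2 (by omega))).trans (hT.1 _ _ _ (Fin.mk_le_mk.2 (by omega)))
  · rw [pad_eq_zero T (by omega) (by omega) (by omega)]
    exact Nat.zero_le _

theorem mem_of_pad_succ_le (hrow : ∀ i j, pad T i (j + 1) ≤ pad T i j)
    (hcol : ∀ i j, pad T (i + 1) j ≤ pad T i j) : T ∈ PlanePartitions a b c := by
  simp only [PlanePartitions, mem_filter, mem_univ, true_and]
  refine ⟨fun i j j' hjj' => ?_, fun i i' j hii' => ?_⟩
  · have := antitone_nat_of_succ_le (hrow (i + 1)) (Nat.add_le_add_right (Fin.le_def.1 hjj') 1)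
    rwa [pad_succ_succ, pad_succ_succ, ← Fin.le_def] at this
  · have := antitone_nat_of_succ_le (f := (pad T · (j + 1))) (hcol · _)
      (Nat.add_le_add_right (Fin.le_def.1 hii') 1)
    dsimp only at this
    rwa [pad_succ_succ, pad_succ_succ, ← Fin.le_def] at this

def lower (T : Fin a → Fin b → Fin (c + 1)) (i j : ℕ) : ℕ :=
  max (pad T i (j + 1)) (pad T (i + 1) j)

def upper (T : Fin a → Fin b → Fin (c + 1)) (i j : ℕ) : ℕ :=
  min (pad T i (j - 1)) (pad T (i - 1) j)

theorem lower_le_pad (hT : T ∈ PlanePartitions a b c) (i j : ℕ) : lower T i j ≤ pad T i j :=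
  max_le (pad_anti hT le_rfl (by omega)) (pad_anti hT (by omega) le_rfl)

theorem pad_le_upper (hT : T ∈ PlanePartitions a b c) (i j : ℕ) : pad T i j ≤ upper T i j :=
  le_min (pad_anti hT le_rfl (by omega)) (pad_anti hT (by omega) le_rfl)

/-- Toggling the file `v` (the cells with `b + i - j = v`) reflects each of its entries in the
interval `[lower, upper]` allowed by its neighbours; no two cells of a file are neighbours, so
they can be toggled at once. On plane partitions the clamp to `c` never bites. -/
def toggle (v : ℕ) (T : Fin a → Fin b → Fin (c + 1)) : Fin a → Fin b → Fin (c + 1) :=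
  fun i j => if b + i = v + j then
    Fin.clamp (lower T (i + 1) (j + 1) + upper T (i + 1) (j + 1) - T i j) c
  else T i j

theorem pad_toggle_of_ne (T : Fin a → Fin b → Fin (c + 1)) {v i j : ℕ} (h : b + i ≠ v + j) :
    pad (toggle v T) i j = pad T i j := by
  by_cases hbox : 0 < i ∧ i ≤ a ∧ 0 < j ∧ j ≤ b
  · rw [pad_of_mem _ hbox.1 hbox.2.1 hbox.2.2.1 hbox.2.2.2,
      pad_of_mem _ hbox.1 hbox.2.1 hbox.2.2.1 hbox.2.2.2, toggle, if_neg (by simp only; omega)]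
  · unfold pad entry
    simp only [dif_neg (show ¬(1 ≤ i ∧ i ≤ a ∧ 1 ≤ j ∧ j ≤ b) by omega)]

theorem pad_toggle_of_eq (hT : T ∈ PlanePartitions a b c) {v i j : ℕ} (hi : 0 < i)
    (hia : i ≤ a) (hj : 0 < j) (hjb : j ≤ b) (h : b + i = v + j) :
    pad (toggle v T) i j = lower T i j + upper T i j - pad T i j := by
  have hlo := lower_le_pad hT i j
  have hup := pad_le_upper hT i j
  have hc : upper T i j ≤ c := (min_le_left _ _).trans (pad_le T _ _)
  rw [pad_of_mem _ hi hia hj hjb, toggle, if_pos (by simp only; omega)]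
  simp only [Fin.clamp, Nat.sub_add_cancel hi, Nat.sub_add_cancel hj, ← pad_of_mem T hi hia hj hjb]
  omega

theorem lower_toggle (T : Fin a → Fin b → Fin (c + 1)) {v i j : ℕ} (h : b + i = v + j) :
    lower (toggle v T) i j = lower T i j := by
  rw [lower, lower, pad_toggle_of_ne T (by omega), pad_toggle_of_ne T (by omega)]

theorem upper_toggle (T : Fin a → Fin b → Fin (c + 1)) {v i j : ℕ} (hi : 0 < i) (hj : 0 < j)
    (h : b + i = v + j) : upper (toggle v T) i j = upper T i j := by
  rw [upper, upper, pad_toggle_of_ne T (by omega), pad_toggle_of_ne T (by omega)]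

theorem pad_toggle_succ_right_le (hT : T ∈ PlanePartitions a b c) (v i j : ℕ) :
    pad (toggle v T) i (j + 1) ≤ pad (toggle v T) i j := by
  by_cases h0 : i = 0 ∨ j = 0
  · rw [pad_of_eq_zero _ h0]
    exact pad_le _ _ _
  by_cases hbox : i ≤ a ∧ j < b
  swap
  · rw [pad_eq_zero _ (by omega) (by omega) (by omega)]
    exact Nat.zero_le _
  by_cases h : b + i = v + j
  · rw [pad_toggle_of_eq hT (by omega) hbox.1 (by omega) (by omega) h,
      pad_toggle_of_ne T (by omega)]
    have := pad_le_upper hT i j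
    have : pad T i (j + 1) ≤ lower T i j := le_max_left _ _
    omega
  by_cases h' : b + i = v + (j + 1)
  · rw [pad_toggle_of_eq hT (by omega) hbox.1 (by omega) (by omega) h', pad_toggle_of_ne T h]
    have := lower_le_pad hT i (j + 1)
    have : upper T i (j + 1) ≤ pad T i j := min_le_left _ _
    omega
  · rw [pad_toggle_of_ne T h, pad_toggle_of_ne T h']
    exact pad_anti hT le_rfl (by omega)

theorem pad_toggle_succ_down_le (hT : T ∈ PlanePartitions a b c) (v i j : ℕ) :
    pad (toggle v T) (i + 1) j ≤ pad (toggle v T) i j := by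
  by_cases h0 : i = 0 ∨ j = 0
  · rw [pad_of_eq_zero _ h0]
    exact pad_le _ _ _
  by_cases hbox : i < a ∧ j ≤ b
  swap
  · rw [pad_eq_zero _ (by omega) (by omega) (by omega)]
    exact Nat.zero_le _
  by_cases h : b + i = v + j
  · rw [pad_toggle_of_eq hT (by omega) (by omega) (by omega) hbox.2 h,
      pad_toggle_of_ne T (by omega)]
    have := pad_le_upper hT i j
    have : pad T (i + 1) j ≤ lower T i j := le_max_right _ _
    omega
  by_cases h' : b + (i + 1) = v + j
  · rw [pad_toggle_of_eq hT (i := i + 1) (by omega) hbox.1 (by omega) hbox.2 h',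
      pad_toggle_of_ne T h]
    have := lower_le_pad hT (i + 1) j
    have : upper T (i + 1) j ≤ pad T i j := min_le_right _ _
    omega
  · rw [pad_toggle_of_ne T h, pad_toggle_of_ne T h']
    exact pad_anti hT (by omega) le_rfl

theorem toggle_mem (hT : T ∈ PlanePartitions a b c) (v : ℕ) :
    toggle v T ∈ PlanePartitions a b c :=
  mem_of_pad_succ_le (pad_toggle_succ_right_le hT v) (pad_toggle_succ_down_le hT v)

theorem toggle_toggle (hT : T ∈ PlanePartitions a b c) (v : ℕ) : toggle v (toggle v T) = T := by
  funext i j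
  by_cases h : b + i = v + j
  · apply Fin.ext
    have hfile : b + (i + 1) = v + (j + 1) := by omega
    rw [← pad_succ_succ (toggle v (toggle v T)), ← pad_succ_succ T,
      pad_toggle_of_eq (toggle_mem hT v) (by omega) i.isLt (by omega) j.isLt hfile,
      lower_toggle T hfile, upper_toggle T (by omega) (by omega) hfile,
      pad_toggle_of_eq hT (i := i + 1) (j := j + 1) (by omega) i.isLt (by omega) j.isLt hfile]
    have := lower_le_pad hT (i + 1) (j + 1)
    have := pad_le_upper hT (i + 1) (j + 1)
    omega
  · simp only [toggle, if_neg h]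

theorem sum_comp_toggle {M : Type*} [AddCommMonoid M] (f : (Fin a → Fin b → Fin (c + 1)) → M)
    (v : ℕ) : ∑ T ∈ PlanePartitions a b c, f (toggle v T) = ∑ T ∈ PlanePartitions a b c, f T :=
  sum_nbij' (toggle v) (toggle v) (fun _ hT => toggle_mem hT v) (fun _ hT => toggle_mem hT v)
    (fun _ hT => toggle_toggle hT v) (fun _ hT => toggle_toggle hT v) (fun _ _ => rfl)

/-- In rows that the file `v` does not meet, the truncated subtraction reads the frame value
`c` (left of the box) or `0` (right of it). -/
def fileEntry (T : Fin a → Fin b → Fin (c + 1)) (v i : ℕ) : ℕ :=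
  pad T i (b + i - v)

def fileSum (T : Fin a → Fin b → Fin (c + 1)) (v : ℕ) : ℕ :=
  ∑ i ∈ range a, fileEntry T v (i + 1)

theorem fileEntry_toggle_add (hT : T ∈ PlanePartitions a b c) {u i : ℕ} (hi : i < a) :
    fileEntry (toggle (u + 1) T) (u + 1) (i + 1) + fileEntry T (u + 1) (i + 1) =
      max (fileEntry T u (i + 1)) (fileEntry T (u + 2) (i + 2)) +
        min (fileEntry T (u + 2) (i + 1)) (fileEntry T u i) := by
  simp only [fileEntry]
  rcases lt_or_ge u i with hright | hu
  · simp (disch := omega) only [pad_eq_zero, max_self, min_eq_right, add_zero]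
  rcases le_or_gt (b + i) u with hleft | hb
  · simp (disch := omega) only [pad_of_eq_zero, max_eq_right (pad_le T _ _), min_self]
  · rw [pad_toggle_of_eq hT (i := i + 1) (by omega) hi (by omega) (by omega) (by omega)]
    have hlo := lower_le_pad hT (i + 1) (b + (i + 1) - (u + 1))
    have hup := pad_le_upper hT (i + 1) (b + (i + 1) - (u + 1))
    have hlower : lower T (i + 1) (b + (i + 1) - (u + 1)) =
        max (pad T (i + 1) (b + (i + 1) - u)) (pad T (i + 2) (b + (i + 2) - (u + 2))) := by
      rw [lower, show b + (i + 1) - (u + 1) + 1 = b + (i + 1) - u by omega,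
        show b + (i + 1) - (u + 1) = b + (i + 2) - (u + 2) by omega]
    have hupper : upper T (i + 1) (b + (i + 1) - (u + 1)) =
        min (pad T (i + 1) (b + (i + 1) - (u + 2))) (pad T i (b + i - u)) := by
      rw [upper, show b + (i + 1) - (u + 1) - 1 = b + (i + 1) - (u + 2) by omega,
        show b + (i + 1) - (u + 1) = b + i - u by omega, Nat.add_sub_cancel]
    omega

theorem fileSum_toggle_add (hT : T ∈ PlanePartitions a b c) {u : ℕ} (hu : u + 2 ≤ a + b) :
    fileSum (toggle (u + 1) T) (u + 1) + fileSum T (u + 1) = fileSum T u + fileSum T (u + 2) := by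
  rw [fileSum, fileSum, ← sum_add_distrib,
    sum_congr rfl fun i hi => fileEntry_toggle_add hT (mem_range.1 hi)]
  refine sum_range_max_add_min_shift _ _ ?_ ?_
  · rw [fileEntry, fileEntry, pad_of_eq_zero T (.inl rfl)]
    exact pad_le T _ _
  · rw [fileEntry, pad_eq_zero T (by omega) (by omega) (.inl (by omega))]
    exact Nat.zero_le _

theorem fileSum_zero (T : Fin a → Fin b → Fin (c + 1)) : fileSum T 0 = 0 :=
  sum_eq_zero fun i _ => pad_eq_zero T (by omega) (by omega) (.inr (by omega))

theorem fileSum_one (T : Fin a → Fin b → Fin (c + 1)) (hb : 0 < b) :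
    fileSum T 1 = entry a b c T 1 b := by
  simp only [fileSum, fileEntry]
  rw [sum_eq_single 0]
  · rw [show b + (0 + 1) - 1 = b by omega, pad, if_neg (by omega)]
  · exact fun i _ hi => pad_eq_zero T (by omega) (by omega) (.inr (by omega))
  · exact fun ha => pad_eq_zero T (by omega) (by omega) (.inl (by simpa using ha))

theorem fileSum_a_add_b (T : Fin a → Fin b → Fin (c + 1)) : fileSum T (a + b) = a * c := by
  simp only [fileSum, fileEntry]
  rw [sum_congr rfl fun i hi => pad_of_eq_zero T (.inr (by simp at hi; omega)),
    sum_const, card_range, smul_eq_mul]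

theorem add_mul_sum_entry_one_b (hb : 0 < b) :
    (a + b) * ∑ T ∈ PlanePartitions a b c, entry a b c T 1 b =
      a * c * #(PlanePartitions a b c) := by
  set p : ℕ → ℕ := fun v => ∑ T ∈ PlanePartitions a b c, fileSum T v
  have hstep : ∀ u, u + 2 ≤ a + b → p u + p (u + 2) = p (u + 1) + p (u + 1) := fun u hu => by
    simp only [p, ← sum_add_distrib]
    rw [← sum_congr rfl fun T hT => fileSum_toggle_add hT hu, sum_add_distrib,
      sum_comp_toggle (fileSum · (u + 1)), sum_add_distrib]
  have hlin := eq_nsmul_of_add_eq_add p (by simp [p, fileSum_zero]) hstep (a + b) le_rfl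
  simp only [p, fileSum_one _ hb, fileSum_a_add_b, sum_const, smul_eq_mul] at hlin
  rw [← hlin, mul_comm]

end PlanePartitions

theorem expected_top_right_corner_general (a b c : ℕ) (hb : 0 < b) :
    E a b c 1 b = (a : ℚ) * c / ((a : ℚ) + b) := by
  have hN : (#(PlanePartitions a b c) : ℚ) ≠ 0 :=
    Nat.cast_ne_zero.2 (card_ne_zero_of_mem (a := fun _ _ => 0) (by simp [PlanePartitions]))
  have key : ((a + b) * ∑ T ∈ PlanePartitions a b c, (entry a b c T 1 b : ℚ)) =
      a * c * #(PlanePartitions a b c) := by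
    exact_mod_cast PlanePartitions.add_mul_sum_entry_one_b hb
  rw [E, div_eq_div_iff hN (by positivity), ← key, mul_comm]

theorem expected_top_right_corner (a b c : ℕ) (ha : 0 < a) (hb : 0 < b) (hc : 0 < c) :
    E a b c 1 b = (a : ℚ) * c / ((a : ℚ) + b) :=
  expected_top_right_corner_general a b c hb
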